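/- Subject reduction for strong field update: assume ρ,h,A ⊨ (Γ,Δ,Θ), ρ(x) = l_x ∈ dom(h), Γ(x) = n ∈ Θ. Then ρ, h[(l_x,f) ↦ ρ(y)], A ⊨ (Γ, Δ[(n,f) ↦ Γ(y)], Θ). -/

import Mathlib

namespace SecureClones

abbrev Var := ℕ
abbrev Field := ℕ
abbrev Loc := ℕ
abbrev PolId := ℕ
abbrev Node := ℕ

/-- Values: locations or null. -/
inductive Val where
  | loc : Loc → Val
  | null : Val
deriving DecidableEq

abbrev Obj := Field → Val
abbrev Heap := Loc → Option Obj
abbrev Env := Var → Val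

/-- An access path: a root variable followed by a sequence of fields. -/
structure Path where
  root : Var
  fields : List Field
deriving DecidableEq

/-- Evaluation of a sequence of field dereferences from a value. -/
def evalFields (h : Heap) : Val → List Field → Option Val
  | v, [] => some v
  | Val.loc l, f :: fs =>
      match h l with
      | some o => evalFields h (o f) fs
      | none => none
  | Val.null, _ :: _ => none

/-- Concrete path evaluation ⟨ρ,h⟩π ⇓ v. -/
def EvalPath (ρ : Env) (h : Heap) (π : Path) (v : Val) : Prop :=
  evalFields h (ρ π.root) π.fields = some v

/-- Reachability in a heap: `Reach h v w` iff `w` is reachable from `v`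
by a (possibly empty) sequence of field dereferences. -/
inductive Reach (h : Heap) : Val → Val → Prop
  | refl (v) : Reach h v v
  | step {v : Val} {l : Loc} {o : Obj} (f : Field) :
      Reach h v (Val.loc l) → h l = some o → Reach h v (o f)

/-- A copy policy: a set of (policy identifier, deep field) pairs. -/
abbrev Pol := Set (PolId × Field)

/-- A field sequence follows only deep fields of a policy (w.r.t. policy map `Pm`). -/
inductive FieldsSat (Pm : PolId → Pol) : Pol → List Field → Prop
  | nil (τ) : FieldsSat Pm τ []
  | cons {τ : Pol} {fs : List Field} (X : PolId) (f : Field) :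
      (X, f) ∈ τ → FieldsSat Pm (Pm X) fs → FieldsSat Pm τ (f :: fs)

/-- ⊢ π : τ : the access path follows only deep fields of τ. -/
def PathSat (Pm : PolId → Pol) (π : Path) (τ : Pol) : Prop :=
  FieldsSat Pm τ π.fields

/-- Policy semantics ρ,h,x ⊨ τ. -/
def PolSem (Pm : PolId → Pol) (ρ : Env) (h : Heap) (x : Var) (τ : Pol) : Prop :=
  ∀ (π π' : Path) (l l' : Loc),
    π.root = x → π'.root ≠ x →
    PathSat Pm π τ →
    EvalPath ρ h π (Val.loc l) → EvalPath ρ h π' (Val.loc l') →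
    l ≠ l'

/-- Base types of the type-and-effect system. -/
inductive BaseType where
  | node : Node → BaseType
  | bot
  | topOut
  | top
deriving DecidableEq

abbrev Graph := Node → Option (Field → BaseType)

/-- A type (Γ,Δ,Θ). -/
structure Ty where
  Γ : Var → BaseType
  Δ : Graph
  Θ : Set Node

/-- Abstract evaluation of a field sequence from a base type, with ⊤, ⊤out as sinks. -/
def aevalFields (Δ : Graph) : BaseType → List Field → Option BaseType
  | t, [] => some t
  | BaseType.node n, f :: fs =>
      match Δ n with
      | some e => aevalFields Δ (e f) fs
      | none => none
  | BaseType.top, _ :: _ => some BaseType.top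
  | BaseType.topOut, _ :: _ => some BaseType.topOut
  | BaseType.bot, _ :: _ => none

/-- Abstract path evaluation [Γ,Δ]π ⇓ t. -/
def AEval (Γ : Var → BaseType) (Δ : Graph) (π : Path) (t : BaseType) : Prop :=
  aevalFields Δ (Γ π.root) π.fields = some t

/-- Auxiliary type interpretation [[v : t]]. -/
inductive AuxInterp (ρ : Env) (h : Heap) (A : Set Loc) (Γ : Var → BaseType) (Δ : Graph) :
    Val → BaseType → Prop
  | null (t) : AuxInterp ρ h A Γ Δ Val.null t
  | top (v) : AuxInterp ρ h A Γ Δ v BaseType.top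
  | topOut (l : Loc) :
      (∀ l' : Loc, Reach h (Val.loc l) (Val.loc l') → l' ∉ A) →
      AuxInterp ρ h A Γ Δ (Val.loc l) BaseType.topOut
  | node (l : Loc) (n : Node) :
      l ∈ A → (Δ n).isSome →
      (∀ π, EvalPath ρ h π (Val.loc l) → AEval Γ Δ π (BaseType.node n)) →
      AuxInterp ρ h A Γ Δ (Val.loc l) (BaseType.node n)

/-- Main type interpretation ρ,h,A ⊨ (Γ,Δ,Θ). -/
structure Interp (ρ : Env) (h : Heap) (A : Set Loc) (T : Ty) : Prop where
  paths : ∀ (π : Path) (t : BaseType) (v : Val),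
    AEval T.Γ T.Δ π t → EvalPath ρ h π v → AuxInterp ρ h A T.Γ T.Δ v t
  strong : ∀ n ∈ T.Θ, ∀ (π π' : Path) (l l' : Loc),
    AEval T.Γ T.Δ π (BaseType.node n) → AEval T.Γ T.Δ π' (BaseType.node n) →
    EvalPath ρ h π (Val.loc l) → EvalPath ρ h π' (Val.loc l') → l = l'

/-- Value sub-typing t ≤_σ t' (σ : Node → Option Node, none standing for ⊤). -/
inductive VSub (σ : Node → Option Node) : BaseType → BaseType → Prop
  | bot (t) : VSub σ BaseType.bot t
  | top {t : BaseType} : (∀ n, t ≠ BaseType.node n) → VSub σ t BaseType.top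
  | topOut : VSub σ BaseType.topOut BaseType.topOut
  | node {n n' : Node} : σ n = some n' → VSub σ (BaseType.node n) (BaseType.node n')
  | nodeTop {n : Node} : σ n = none → VSub σ (BaseType.node n) BaseType.top

/-- T₁ ⊑ T₂ via the fusion map σ. -/
structure SubtypeVia (T₁ T₂ : Ty) (σ : Node → Option Node) : Prop where
  st1 : ∀ n n', (T₁.Δ n).isSome → σ n = some n' → (T₂.Δ n').isSome
  st2 : ∀ (t₁ : BaseType) (π : Path), AEval T₁.Γ T₁.Δ π t₁ →
      ∃ t₂, VSub σ t₁ t₂ ∧ AEval T₂.Γ T₂.Δ π t₂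
  st3 : ∀ n₂ ∈ T₂.Θ, ∃ n₁ ∈ T₁.Θ,
      ∀ n, ((T₁.Δ n).isSome ∧ σ n = some n₂) ↔ n = n₁

/-- The sub-typing relation T₁ ⊑ T₂. -/
def TySub (T₁ T₂ : Ty) : Prop := ∃ σ, SubtypeVia T₁ T₂ σ

-- Successor base type of a policy node for field f: the node of the policy
-- governing f if f is deep, and ⊤ otherwise.
open Classical in
noncomputable def polEdge (τ : Pol) (f : Field) : BaseType :=
  if h : ∃ X, (X, f) ∈ τ then BaseType.node (h.choose + 1) else BaseType.top

/-- The graph part of Φ(τ): node 0 is the unfolded root n_τ, node X+1 is the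
node n'_X of policy identifier X. -/
noncomputable def PhiGraph (Pm : PolId → Pol) (τ : Pol) : Graph :=
  fun n =>
    match n with
    | 0 => some (polEdge τ)
    | m + 1 => some (polEdge (Pm m))

/-- The root node n_τ of Φ(τ). -/
def PhiRoot : Node := 0

/-- Heap update h[(l,f) ↦ v]. -/
def hupd (h : Heap) (l : Loc) (f : Field) (v : Val) : Heap :=
  fun l' => if l' = l then (h l).map (fun o => Function.update o f v) else h l'

/-- Graph update Δ[(n,f) ↦ t]. -/
def gupd (Δ : Graph) (n : Node) (f : Field) (t : BaseType) : Graph :=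
  fun m => if m = n then (Δ n).map (fun e => Function.update e f t) else Δ m

/-
The updated heap and graph are simulated by the old ones: every value reached in the new heap by
a path whose type in the new graph is `t` is also reached in the old heap by some path of type
`t` in the old graph. A path is followed field by field; the only step whose behaviour changed
is `(lx, f)`, and strongness of `n` says that a location has old type `n` exactly when it is
`lx`, so that step is taken concretely and abstractly at the same time and leads to `ρ y : Γ y`.
All clauses of the interpretation thus transfer from the old state, reachability included,
because `lx ∈ A` cannot be reached from a `⊤out` location.
-/

theorem evalFields_append (h : Heap) (v : Val) (fs gs : List Field) :
    evalFields h v (fs ++ gs) = (evalFields h v fs).bind fun w => evalFields h w gs := by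
  induction fs generalizing v with
  | nil => rfl
  | cons g fs ih =>
    cases v with
    | null => rfl
    | loc l => cases hl : h l <;> simp [evalFields, hl, ih]

theorem aevalFields_append (Δ : Graph) (t : BaseType) (fs gs : List Field) :
    aevalFields Δ t (fs ++ gs) = (aevalFields Δ t fs).bind fun s => aevalFields Δ s gs := by
  induction fs generalizing t with
  | nil => rfl
  | cons g fs ih =>
    cases t with
    | node m => cases hm : Δ m <;> simp [aevalFields, hm, ih]
    | bot => rfl
    | top | topOut => cases gs <;> rfl

theorem AEval.unique {Γ : Var → BaseType} {Δ : Graph} {π : Path} {t t' : BaseType}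
    (ht : AEval Γ Δ π t) (ht' : AEval Γ Δ π t') : t = t' :=
  Option.some.inj (ht.symm.trans ht')

theorem evalFields_simulation {h : Heap} {Δ : Graph} (R : Val → BaseType → Prop)
    (hstep : ∀ {v t g w}, R v t → evalFields h v [g] = some w →
      ∃ u, aevalFields Δ t [g] = some u ∧ R w u) (fs : List Field) {v w : Val} {t : BaseType}
    (hvt : R v t) (hw : evalFields h v fs = some w) :
    ∃ u, aevalFields Δ t fs = some u ∧ R w u := by
  induction fs generalizing v t with
  | nil => exact ⟨t, rfl, Option.some.inj hw ▸ hvt⟩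
  | cons g gs ih =>
    rw [← List.singleton_append, evalFields_append, Option.bind_eq_some_iff] at hw
    obtain ⟨v₁, hv₁, hw⟩ := hw
    obtain ⟨t₁, ht₁, hvt₁⟩ := hstep hvt hv₁
    obtain ⟨u, hu, hwu⟩ := ih hvt₁ hw
    refine ⟨u, ?_, hwu⟩
    rw [← List.singleton_append, aevalFields_append, ht₁]
    exact hu

theorem evalFields_hupd_self (h : Heap) (l : Loc) (f : Field) (w : Val) :
    evalFields (hupd h l f w) (Val.loc l) [f] = (h l).map fun _ => w := by
  cases hl : h l <;> simp [evalFields, hupd, hl]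

theorem evalFields_hupd_of_ne {h : Heap} {l : Loc} {f g : Field} {w v : Val}
    (hne : (v, g) ≠ (Val.loc l, f)) :
    evalFields (hupd h l f w) v [g] = evalFields h v [g] := by
  cases v with
  | null => rfl
  | loc l' =>
    by_cases hl : l' = l
    · subst hl
      have hg : g ≠ f := fun hg => hne (by rw [hg])
      cases hl' : h l' <;> simp [evalFields, hupd, hl', Function.update_of_ne hg]
    · simp [evalFields, hupd, hl]

theorem aevalFields_gupd_self (Δ : Graph) (n : Node) (f : Field) (s : BaseType) :
    aevalFields (gupd Δ n f s) (BaseType.node n) [f] = (Δ n).map fun _ => s := by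
  cases hn : Δ n <;> simp [aevalFields, gupd, hn]

theorem aevalFields_gupd_of_ne {Δ : Graph} {n : Node} {f g : Field} {s t : BaseType}
    (hne : (t, g) ≠ (BaseType.node n, f)) :
    aevalFields (gupd Δ n f s) t [g] = aevalFields Δ t [g] := by
  cases t with
  | node m =>
    by_cases hm : m = n
    · subst hm
      have hg : g ≠ f := fun hg => hne (by rw [hg])
      cases hm' : Δ m <;> simp [aevalFields, gupd, hm', Function.update_of_ne hg]
    · simp [aevalFields, gupd, hm]
  | bot | top | topOut => rfl

theorem gupd_isSome (Δ : Graph) (n : Node) (f : Field) (s : BaseType) (m : Node) :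
    (gupd Δ n f s m).isSome = (Δ m).isSome := by
  by_cases hm : m = n
  · subst hm; simp [gupd]
  · simp [gupd, hm]

theorem Reach.of_hupd {h : Heap} {l : Loc} {f : Field} {w v v' : Val}
    (hr : Reach (hupd h l f w) v v') (hl : ¬ Reach h v (Val.loc l)) : Reach h v v' := by
  induction hr with
  | refl => exact Reach.refl _
  | @step l' o g _ ho ih =>
    have hne : l' ≠ l := by rintro rfl; exact hl ih
    rw [hupd, if_neg hne] at ho
    exact ih.step g ho

def HasPathType (ρ : Env) (h : Heap) (Γ : Var → BaseType) (Δ : Graph) (v : Val)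
    (t : BaseType) : Prop :=
  ∃ π, EvalPath ρ h π v ∧ AEval Γ Δ π t

section PathTypes

variable {ρ : Env} {h : Heap} {A : Set Loc} {Γ : Var → BaseType} {Δ : Graph} {Θ : Set Node}
  {v w : Val} {t u : BaseType} {g : Field}

theorem HasPathType.var (x : Var) : HasPathType ρ h Γ Δ (ρ x) (Γ x) :=
  ⟨⟨x, []⟩, rfl, rfl⟩

theorem HasPathType.field (hvt : HasPathType ρ h Γ Δ v t) (hw : evalFields h v [g] = some w)
    (hu : aevalFields Δ t [g] = some u) : HasPathType ρ h Γ Δ w u := by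
  obtain ⟨π, hπv, hπt⟩ := hvt
  refine ⟨⟨π.root, π.fields ++ [g]⟩, ?_, ?_⟩
  · change evalFields h (ρ π.root) (π.fields ++ [g]) = some w
    rw [evalFields_append, hπv]
    exact hw
  · change aevalFields Δ (Γ π.root) (π.fields ++ [g]) = some u
    rw [aevalFields_append, hπt]
    exact hu

theorem AuxInterp.aevalFields_isSome {l : Loc} (hl : AuxInterp ρ h A Γ Δ (Val.loc l) t) :
    (aevalFields Δ t [g]).isSome := by
  cases hl with
  | top | topOut => rfl
  | node _ m _ hm =>
    obtain ⟨e, he⟩ := Option.isSome_iff_exists.mp hm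
    simp [aevalFields, he]

theorem AuxInterp.eq_of_hasPathType {l : Loc} {m : Node}
    (hl : AuxInterp ρ h A Γ Δ (Val.loc l) (BaseType.node m))
    (hlt : HasPathType ρ h Γ Δ (Val.loc l) t) : t = BaseType.node m := by
  obtain ⟨π, hπl, hπt⟩ := hlt
  cases hl with
  | node _ _ _ _ hpaths => exact hπt.unique (hpaths π hπl)

namespace Interp

theorem auxInterp (hI : Interp ρ h A ⟨Γ, Δ, Θ⟩)
    (hvt : HasPathType ρ h Γ Δ v t) : AuxInterp ρ h A Γ Δ v t :=
  let ⟨π, hπv, hπt⟩ := hvt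
  hI.paths π t v hπt hπv

theorem hasPathType_step (hI : Interp ρ h A ⟨Γ, Δ, Θ⟩)
    (hvt : HasPathType ρ h Γ Δ v t) (hw : evalFields h v [g] = some w) :
    ∃ u, aevalFields Δ t [g] = some u ∧ HasPathType ρ h Γ Δ w u := by
  cases v with
  | null => cases hw
  | loc l =>
    obtain ⟨u, hu⟩ := Option.isSome_iff_exists.mp (hI.auxInterp hvt).aevalFields_isSome
    exact ⟨u, hu, hvt.field hw hu⟩

theorem loc_eq_of_strong (hI : Interp ρ h A ⟨Γ, Δ, Θ⟩)
    {n : Node} (hn : n ∈ Θ) {l l' : Loc}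
    (hl : HasPathType ρ h Γ Δ (Val.loc l) (BaseType.node n))
    (hl' : HasPathType ρ h Γ Δ (Val.loc l') (BaseType.node n)) : l = l' :=
  let ⟨π, hπl, hπn⟩ := hl
  let ⟨π', hπl', hπn'⟩ := hl'
  hI.strong n hn π π' l l' hπn hπn' hπl hπl'

end Interp

section StrongUpdate

variable {lx : Loc} {n : Node} {f : Field} {y : Var}

theorem hasPathType_step_update (hI : Interp ρ h A ⟨Γ, Δ, Θ⟩)
    (hlx : HasPathType ρ h Γ Δ (Val.loc lx) (BaseType.node n)) (hn : n ∈ Θ)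
    (hvt : HasPathType ρ h Γ Δ v t) (hw : evalFields (hupd h lx f (ρ y)) v [g] = some w) :
    ∃ u, aevalFields (gupd Δ n f (Γ y)) t [g] = some u ∧ HasPathType ρ h Γ Δ w u := by
  by_cases hvg : (v, g) = (Val.loc lx, f)
  · obtain ⟨rfl, rfl⟩ := Prod.mk.inj hvg
    have hlxA := hI.auxInterp hlx
    obtain rfl := hlxA.eq_of_hasPathType hvt
    rw [evalFields_hupd_self] at hw
    obtain ⟨_, -, rfl⟩ := Option.map_eq_some_iff.mp hw
    refine ⟨Γ y, ?_, HasPathType.var y⟩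
    cases hlxA with
    | node _ _ _ hΔn _ =>
      obtain ⟨e, he⟩ := Option.isSome_iff_exists.mp hΔn
      simp [aevalFields_gupd_self, he]
  · rw [evalFields_hupd_of_ne hvg] at hw
    -- only `lx` has old type `n`, so the edge `(n, f)` is followed only from `lx`
    have htg : (t, g) ≠ (BaseType.node n, f) := by
      intro htg
      obtain ⟨rfl, rfl⟩ := Prod.mk.inj htg
      cases v with
      | null => cases hw
      | loc l => exact hvg (by rw [hI.loc_eq_of_strong hn hvt hlx])
    rw [aevalFields_gupd_of_ne htg]
    exact hI.hasPathType_step hvt hw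

theorem hasPathType_of_update (hI : Interp ρ h A ⟨Γ, Δ, Θ⟩)
    (hlx : HasPathType ρ h Γ Δ (Val.loc lx) (BaseType.node n)) (hn : n ∈ Θ) {π : Path}
    (hπ : EvalPath ρ (hupd h lx f (ρ y)) π v) :
    ∃ t, AEval Γ (gupd Δ n f (Γ y)) π t ∧ HasPathType ρ h Γ Δ v t :=
  evalFields_simulation (HasPathType ρ h Γ Δ) (hasPathType_step_update hI hlx hn) π.fields
    (HasPathType.var π.root) hπ

theorem auxInterp_update (hI : Interp ρ h A ⟨Γ, Δ, Θ⟩)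
    (hlx : HasPathType ρ h Γ Δ (Val.loc lx) (BaseType.node n)) (hn : n ∈ Θ)
    (hvt : AuxInterp ρ h A Γ Δ v t) :
    AuxInterp ρ (hupd h lx f (ρ y)) A Γ (gupd Δ n f (Γ y)) v t := by
  cases hvt with
  | null => exact .null t
  | top => exact .top v
  | topOut l hsafe =>
    have hlxA : lx ∈ A := by
      cases hI.auxInterp hlx with
      | node _ _ hA _ _ => exact hA
    exact .topOut l fun l' hr => hsafe l' (hr.of_hupd fun hr' => hsafe lx hr' hlxA)
  | node l m hA hm hpaths =>
    refine .node l m hA (by rwa [gupd_isSome]) fun π hπ => ?_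
    obtain ⟨u, hu, hlu⟩ := hasPathType_of_update hI hlx hn hπ
    rwa [(AuxInterp.node l m hA hm hpaths).eq_of_hasPathType hlu] at hu

end StrongUpdate

end PathTypes

theorem subject_reduction_strong_update_general
    (ρ : Env) (h : Heap) (A : Set Loc) (Γ : Var → BaseType) (Δ : Graph) (Θ : Set Node)
    (x y : Var) (lx : Loc) (n : Node) (f : Field)
    (hint : Interp ρ h A ⟨Γ, Δ, Θ⟩)
    (hx : ρ x = Val.loc lx)
    (hΓx : Γ x = BaseType.node n) (hstrong : n ∈ Θ) :
    Interp ρ (hupd h lx f (ρ y)) A ⟨Γ, gupd Δ n f (Γ y), Θ⟩ := by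
  have hlx : HasPathType ρ h Γ Δ (Val.loc lx) (BaseType.node n) := by
    rw [← hx, ← hΓx]
    exact HasPathType.var x
  refine ⟨fun π t v hπt hπv => ?_, fun m hm π π' l l' hπm hπ'm hπl hπ'l => ?_⟩
  · obtain ⟨u, hπu, hvu⟩ := hasPathType_of_update hint hlx hstrong hπv
    rw [hπt.unique hπu]
    exact auxInterp_update hint hlx hstrong (hint.auxInterp hvu)
  · obtain ⟨u, hπu, hlu⟩ := hasPathType_of_update hint hlx hstrong hπl
    obtain ⟨u', hπ'u', hlu'⟩ := hasPathType_of_update hint hlx hstrong hπ'l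
    rw [← hπm.unique hπu] at hlu
    rw [← hπ'm.unique hπ'u'] at hlu'
    exact hint.loc_eq_of_strong hm hlu hlu'

/-- Subject reduction for strong field update x.f := y. -/
theorem subject_reduction_strong_update
    (ρ : Env) (h : Heap) (A : Set Loc) (Γ : Var → BaseType) (Δ : Graph) (Θ : Set Node)
    (x y : Var) (lx : Loc) (n : Node) (f : Field)
    (hint : Interp ρ h A ⟨Γ, Δ, Θ⟩)
    (hx : ρ x = Val.loc lx) (hdom : (h lx).isSome)
    (hΓx : Γ x = BaseType.node n) (hstrong : n ∈ Θ) :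
    Interp ρ (hupd h lx f (ρ y)) A ⟨Γ, gupd Δ n f (Γ y), Θ⟩ :=
  subject_reduction_strong_update_general ρ h A Γ Δ Θ x y lx n f hint hx hΓx hstrong

end SecureClones
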